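/- arXiv:2306.09168 — 2 statements merged into one kernel-verified Lean document; each statement's English description precedes it below -/
import Mathlib

section
/- Let σ: [0,∞) → [0,∞) be a C¹ function with σ(0) = σ'(0) = 0 and σ' concave. Then for all p₁, p₂ ≥ 0 we have p₁·σ'(p₂) ≤ σ(p₁) + σ(p₂). -/
/-!
Concavity of `σ'` together with `σ'(0) = 0` gives the chord bound `t σ'(q) ≤ q σ'(t)` for
`0 ≤ t ≤ q`. Since `σ ≥ 0`, this forces `σ' ≥ 0` (a negative value would make `σ` decrease at
least linearly), and a nonnegative concave function on a half-line is nondecreasing, so `σ` is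
convex and lies above its tangent line at `p₂`: `p₁ σ'(p₂) ≤ σ(p₁) - σ(p₂) + p₂ σ'(p₂)`.
Integrating the chord bound over `[0, p₂]` gives `p₂ σ'(p₂) ≤ 2 σ(p₂)`, which closes the estimate.
-/

open Set

lemma ConcaveOn.mul_le_mul_of_map_zero {g : ℝ → ℝ} (hg : ConcaveOn ℝ (Ici 0) g) (hg0 : g 0 = 0)
    {t q : ℝ} (ht : 0 ≤ t) (htq : t ≤ q) : t * g q ≤ q * g t := by
  rcases ht.eq_or_lt with rfl | ht
  · simp [hg0]
  have hq := ht.trans_le htq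
  have hslope : g q / q ≤ g t / t := by
    simpa [slope_def_field, hg0] using
      hg.slope_anti self_mem_Ici ⟨ht.le, ht.ne'⟩ ⟨hq.le, hq.ne'⟩ htq
  rw [div_le_div_iff₀ hq ht] at hslope
  linarith

lemma ConcaveOn.monotoneOn_of_nonneg {g : ℝ → ℝ} {a : ℝ} (hg : ConcaveOn ℝ (Ici a) g)
    (hg_nonneg : ∀ x ∈ Ici a, 0 ≤ g x) : MonotoneOn g (Ici a) := by
  intro p hp t ht hpt
  rcases hpt.eq_or_lt with rfl | hpt
  · exact le_rfl
  by_contra! hlt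
  set c := (g p - g t) / (t - p) with hc
  have hc_pos : 0 < c := div_pos (by linarith) (by linarith)
  have hgt_div : 0 ≤ g t / c := div_nonneg (hg_nonneg t ht) hc_pos.le
  -- Beyond `t`, `g` lies below its secant through `p` and `t`, which is negative at `s`.
  set s := t + g t / c + 1 with hs
  have hts : t < s := by linarith
  have hsecant := hg.slope_anti_adjacent hp (show s ∈ Ici a from le_trans ht hts.le) hpt hts
  rw [show (g t - g p) / (t - p) = -c by rw [hc, ← neg_div, neg_sub],
    div_le_iff₀ (sub_pos.2 hts)] at hsecant
  have hcs : c * (s - t) = g t + c := by rw [hs]; field_simp; ring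
  linarith [hg_nonneg s (le_trans ht hts.le)]

section MeanValue

variable {f f' : ℝ → ℝ} {a b C : ℝ}

lemma mul_sub_le_sub_of_le_hasDerivAt (hab : a ≤ b) (hf : ∀ x ∈ Icc a b, HasDerivAt f (f' x) x)
    (hC : ∀ x ∈ Ioo a b, C ≤ f' x) : C * (b - a) ≤ f b - f a := by
  rcases hab.eq_or_lt with rfl | hab
  · simp
  obtain ⟨ξ, hξ, hslope⟩ := exists_hasDerivAt_eq_slope f f' hab
    (fun x hx => (hf x hx).continuousAt.continuousWithinAt)
    (fun x hx => hf x (Ioo_subset_Icc_self hx))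
  rw [← le_div_iff₀ (sub_pos.2 hab), ← hslope]
  exact hC ξ hξ

lemma sub_le_mul_sub_of_hasDerivAt_le (hab : a ≤ b) (hf : ∀ x ∈ Icc a b, HasDerivAt f (f' x) x)
    (hC : ∀ x ∈ Ioo a b, f' x ≤ C) : f b - f a ≤ C * (b - a) := by
  have := mul_sub_le_sub_of_le_hasDerivAt (f := -f) (f' := -f') (C := -C) hab
    (fun x hx => (hf x hx).neg) (fun x hx => neg_le_neg (hC x hx))
  simp only [Pi.neg_apply] at this
  linarith

lemma MonotoneOn.add_mul_sub_le_of_hasDerivAt {D : Set ℝ} (hD : D.OrdConnected)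
    (hf : ∀ x ∈ D, HasDerivAt f (f' x) x) (hmono : MonotoneOn f' D) {x y : ℝ}
    (hx : x ∈ D) (hy : y ∈ D) : f y + f' y * (x - y) ≤ f x := by
  rcases le_total y x with hyx | hxy
  · have := mul_sub_le_sub_of_le_hasDerivAt hyx (fun z hz => hf z (hD.out hy hx hz))
      (fun z hz => hmono hy (hD.out hy hx (Ioo_subset_Icc_self hz)) hz.1.le)
    linarith
  · have := sub_le_mul_sub_of_hasDerivAt_le hxy (fun z hz => hf z (hD.out hx hy hz))
      (fun z hz => hmono (hD.out hx hy (Ioo_subset_Icc_self hz)) hy hz.2.le)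
    linarith

end MeanValue

section ConcaveDerivative

variable {σ σ' : ℝ → ℝ}

lemma nonneg_of_concaveOn_of_hasDerivAt (hderiv : ∀ p ∈ Ici (0:ℝ), HasDerivAt σ (σ' p) p)
    (hnn : ∀ p ∈ Ici (0:ℝ), 0 ≤ σ p) (hσ'0 : σ' 0 = 0) (hconc : ConcaveOn ℝ (Ici 0) σ') :
    ∀ p ∈ Ici (0:ℝ), 0 ≤ σ' p := by
  intro a ha
  rcases (mem_Ici.1 ha).eq_or_lt with rfl | ha
  · rw [hσ'0]
  by_contra! hneg
  have hdecr : ∀ x, a ≤ x → σ' x ≤ σ' a := fun x hax =>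
    le_of_mul_le_mul_left
      ((hconc.mul_le_mul_of_map_zero hσ'0 ha.le hax).trans (by nlinarith)) ha
  set T := a + (σ a + 1) / -σ' a with hT
  have haT : a ≤ T := le_add_of_nonneg_right (div_nonneg (by linarith [hnn a ha.le]) (by linarith))
  have hdrop := sub_le_mul_sub_of_hasDerivAt_le haT (fun x hx => hderiv x (ha.le.trans hx.1))
    (fun x hx => hdecr x hx.1.le)
  have hlin : σ' a * (T - a) = -(σ a + 1) := by rw [hT]; field_simp [hneg.ne]; ring
  linarith [hnn T (ha.le.trans haT)]

lemma mul_le_two_mul_of_concaveOn_of_hasDerivAt (hderiv : ∀ p ∈ Ici (0:ℝ), HasDerivAt σ (σ' p) p)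
    (hσ0 : σ 0 = 0) (hσ'0 : σ' 0 = 0) (hconc : ConcaveOn ℝ (Ici 0) σ') {q : ℝ} (hq : 0 ≤ q) :
    q * σ' q ≤ 2 * σ q := by
  rcases hq.eq_or_lt with rfl | hq
  · simp [hσ0]
  -- `x ↦ 2 q σ x - σ'(q) x²` is nondecreasing on `[0, q]` by the chord bound.
  have hg : ∀ x ∈ Icc 0 q, HasDerivAt (fun x => 2 * q * σ x - σ' q * x ^ 2)
      (2 * q * σ' x - σ' q * (2 * x)) x := fun x hx => by
    simpa using ((hderiv x hx.1).const_mul (2 * q)).fun_sub ((hasDerivAt_pow 2 x).const_mul (σ' q))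
  have := mul_sub_le_sub_of_le_hasDerivAt (C := 0) hq.le hg fun x hx => by
    nlinarith [hconc.mul_le_mul_of_map_zero hσ'0 hx.1.le hx.2.le]
  simp only [hσ0] at this
  nlinarith

end ConcaveDerivative

theorem stmt1_general (σ σ' : ℝ → ℝ)
    (hderiv : ∀ p ∈ Set.Ici (0:ℝ), HasDerivAt σ (σ' p) p)
    (hnn : ∀ p ∈ Set.Ici (0:ℝ), 0 ≤ σ p)
    (hσ0 : σ 0 = 0) (hσ'0 : σ' 0 = 0)
    (hconc : ConcaveOn ℝ (Set.Ici 0) σ') :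
    ∀ p₁ ∈ Set.Ici (0:ℝ), ∀ p₂ ∈ Set.Ici (0:ℝ), p₁ * σ' p₂ ≤ σ p₁ + σ p₂ := by
  intro p₁ hp₁ p₂ hp₂
  have hmono : MonotoneOn σ' (Ici 0) :=
    hconc.monotoneOn_of_nonneg (nonneg_of_concaveOn_of_hasDerivAt hderiv hnn hσ'0 hconc)
  have htangent := hmono.add_mul_sub_le_of_hasDerivAt ordConnected_Ici hderiv hp₁ hp₂
  have hhalf := mul_le_two_mul_of_concaveOn_of_hasDerivAt hderiv hσ0 hσ'0 hconc hp₂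
  linarith

/-- p₁·σ'(p₂) ≤ σ(p₁) + σ(p₂). -/
theorem stmt1 (σ σ' : ℝ → ℝ)
    (hderiv : ∀ p ∈ Set.Ici (0:ℝ), HasDerivAt σ (σ' p) p)
    (hcont : ContinuousOn σ' (Set.Ici 0))
    (hnn : ∀ p ∈ Set.Ici (0:ℝ), 0 ≤ σ p)
    (hσ0 : σ 0 = 0) (hσ'0 : σ' 0 = 0)
    (hconc : ConcaveOn ℝ (Set.Ici 0) σ') :
    ∀ p₁ ∈ Set.Ici (0:ℝ), ∀ p₂ ∈ Set.Ici (0:ℝ), p₁ * σ' p₂ ≤ σ p₁ + σ p₂ :=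
  stmt1_general σ σ' hderiv hnn hσ0 hσ'0 hconc
end

section
/- Let σ: [0,∞) → [0,∞) be a C¹ function with σ(0) = σ'(0) = 0 and σ' concave. Then for all p₁, p₂ > 0, 0 ≤ σ(p₁+p₂) − σ(p₁) − σ(p₂) ≤ 2·(p₁·σ(p₂) + p₂·σ(p₁))/(p₁+p₂). -/
/-!
A concave function `f` on `[0, ∞)` with `f 0 ≥ 0` satisfies `x f y ≤ y f x` for `x ≤ y`, hence is
subadditive. For `f = σ'` the first fact gives `p σ' p ≤ 2 σ p` (integrate over `[0, p]`), the
second gives `σ (p₁ + p₂) - σ p₁ - σ p₂ ≤ p₂ σ' p₁` (differentiate in `p₂`); averaging this bound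
with its mirror image and inserting the first one yields the upper estimate. The lower estimate is
convexity of `σ`: a concave `σ'` that ever decreases tends to `-∞` linearly, and then `σ` cannot
stay nonnegative.
-/

open Set Filter

section Concave

variable {𝕜 : Type*} [Field 𝕜] [LinearOrder 𝕜] [IsStrictOrderedRing 𝕜] {f : 𝕜 → 𝕜}

theorem ConcaveOn.mul_le_mul_of_map_zero_nonneg (hf : ConcaveOn 𝕜 (Ici 0) f) (hf0 : 0 ≤ f 0)
    {x y : 𝕜} (hx : 0 ≤ x) (hxy : x ≤ y) : x * f y ≤ y * f x := by
  rcases hx.eq_or_lt with rfl | hx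
  · simpa using mul_nonneg (hx.trans hxy) hf0
  rcases hxy.eq_or_lt with rfl | hxy
  · rw [mul_comm]
  have := hf.neg.secant_mono_aux1 self_mem_Ici (hx.trans hxy).le hx hxy
  simp only [Pi.neg_apply, sub_zero] at this
  nlinarith

theorem ConcaveOn.map_add_le (hf : ConcaveOn 𝕜 (Ici 0) f) (hf0 : 0 ≤ f 0) {x y : 𝕜}
    (hx : 0 ≤ x) (hy : 0 ≤ y) : f (x + y) ≤ f x + f y := by
  rcases (add_nonneg hx hy).eq_or_lt with hxy | hxy
  · obtain ⟨rfl, rfl⟩ : x = 0 ∧ y = 0 := ⟨by linarith, by linarith⟩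
    simpa using hf0
  have hxf := hf.mul_le_mul_of_map_zero_nonneg hf0 hx (le_add_of_nonneg_right hy)
  have hyf := hf.mul_le_mul_of_map_zero_nonneg hf0 hy (le_add_of_nonneg_left hx)
  refine le_of_mul_le_mul_left ?_ hxy
  linarith

end Concave

theorem ConcaveOn.tendsto_atBot_of_lt {f : ℝ → ℝ} {a x y : ℝ} (hf : ConcaveOn ℝ (Ici a) f)
    (hx : a ≤ x) (hxy : x < y) (hfxy : f y < f x) : Tendsto f atTop atBot := by
  set k := (f y - f x) / (y - x)
  have hk : k < 0 := div_neg_of_neg_of_pos (by linarith) (by linarith)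
  refine tendsto_atBot_mono' _ ?_
    (tendsto_atBot_add_const_left _ (f y - k * y) (tendsto_id.const_mul_atTop_of_neg hk))
  filter_upwards [eventually_gt_atTop y] with z hz
  have := hf.slope_anti_adjacent hx (hx.trans (hxy.trans hz).le) hxy hz
  rw [div_le_iff₀ (by linarith)] at this
  simp only [id]
  linarith

theorem tendsto_atBot_of_hasDerivAt_tendsto_atBot {f f' : ℝ → ℝ} {a : ℝ}
    (hf : ∀ x ∈ Ici a, HasDerivAt f (f' x) x) (hf' : Tendsto f' atTop atBot) :
    Tendsto f atTop atBot := by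
  obtain ⟨b, hb⟩ := eventually_atTop.1 ((hf'.eventually_le_atBot (-1)).and (eventually_ge_atTop a))
  have hf_b : ∀ z ∈ Ici b, HasDerivAt f (f' z) z := fun z hz => hf z ((hb b le_rfl).2.trans hz)
  have hslope : ∀ x ∈ Ici b, f x - f b ≤ -1 * (x - b) := fun x hx =>
    (convex_Ici b).image_sub_le_mul_sub_of_deriv_le
      (fun z hz => (hf_b z hz).continuousAt.continuousWithinAt)
      (fun z hz => (hf_b z (interior_subset hz)).differentiableAt.differentiableWithinAt)
      (fun z hz => by
        rw [interior_Ici] at hz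
        rw [(hf_b z (mem_Ici.2 hz.le)).deriv]
        exact (hb z hz.le).1)
      b self_mem_Ici x hx hx
  refine tendsto_atBot_mono' _ ?_
    (tendsto_atBot_add_const_left _ (f b + b) tendsto_neg_atTop_atBot)
  filter_upwards [eventually_ge_atTop b] with x hx
  linarith [hslope x hx]

theorem Convex.monotoneOn_of_hasDerivAt_nonneg {D : Set ℝ} (hD : Convex ℝ D) {f f' : ℝ → ℝ}
    (hf : ∀ x ∈ D, HasDerivAt f (f' x) x) (hf' : ∀ x ∈ interior D, 0 ≤ f' x) :
    MonotoneOn f D :=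
  monotoneOn_of_hasDerivWithinAt_nonneg hD (fun x hx => (hf x hx).continuousAt.continuousWithinAt)
    (fun x hx => (hf x (interior_subset hx)).hasDerivWithinAt) hf'

section Derivative

variable {σ σ' : ℝ → ℝ} (hσ : ∀ x ∈ Ici (0 : ℝ), HasDerivAt σ (σ' x) x)
include hσ

theorem monotoneOn_deriv_of_concaveOn_of_bddBelow (hconc : ConcaveOn ℝ (Ici 0) σ')
    (hbdd : BddBelow (σ '' Ici 0)) : MonotoneOn σ' (Ici 0) := by
  intro x hx y _ hxy
  by_contra! hlt
  obtain ⟨m, hm⟩ := hbdd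
  have hσ_bot := tendsto_atBot_of_hasDerivAt_tendsto_atBot hσ
    (hconc.tendsto_atBot_of_lt hx (hxy.lt_of_ne (by rintro rfl; exact hlt.false)) hlt)
  obtain ⟨z, hmz, hz⟩ := ((hσ_bot.eventually_lt_atBot m).and (eventually_ge_atTop 0)).exists
  exact (hm ⟨z, hz, rfl⟩).not_gt hmz

theorem add_le_add_of_monotoneOn_deriv (hmono : MonotoneOn σ' (Ici 0)) {x y : ℝ} (hx : 0 ≤ x)
    (hy : 0 ≤ y) : σ x + σ y ≤ σ (x + y) + σ 0 := by
  have hg : MonotoneOn (fun u => σ (x + u) - σ u) (Ici 0) :=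
    (convex_Ici 0).monotoneOn_of_hasDerivAt_nonneg
      (fun u hu => ((hσ (x + u) (add_nonneg hx hu)).comp_const_add x u).sub (hσ u hu))
      (fun u hu => by
        rw [interior_Ici] at hu
        exact sub_nonneg.2 (hmono (mem_Ici.2 hu.le) (mem_Ici.2 (add_nonneg hx hu.le))
          (le_add_of_nonneg_left hx)))
  have := hg self_mem_Ici hy hy
  simp only [add_zero] at this
  linarith

theorem add_le_add_mul_deriv_of_concaveOn (hconc : ConcaveOn ℝ (Ici 0) σ') (h0 : 0 ≤ σ' 0)
    {x y : ℝ} (hx : 0 ≤ x) (hy : 0 ≤ y) : σ (x + y) + σ 0 ≤ σ x + σ y + y * σ' x := by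
  have hg : MonotoneOn (fun u => σ u + u * σ' x - σ (x + u)) (Ici 0) :=
    (convex_Ici 0).monotoneOn_of_hasDerivAt_nonneg
      (fun u hu => ((hσ u hu).add ((hasDerivAt_id u).mul_const (σ' x))).sub
        ((hσ (x + u) (add_nonneg hx hu)).comp_const_add x u))
      (fun u hu => by
        rw [interior_Ici] at hu
        simpa [add_comm (σ' u)] using hconc.map_add_le h0 hx hu.le)
  have := hg self_mem_Ici hy hy
  simp only [add_zero, zero_mul] at this
  linarith

theorem mul_deriv_le_two_mul_of_concaveOn (hconc : ConcaveOn ℝ (Ici 0) σ') (h0 : 0 ≤ σ' 0)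
    {p : ℝ} (hp : 0 < p) : p * σ' p ≤ 2 * (σ p - σ 0) := by
  have hg : MonotoneOn (fun x => 2 * p * σ x - x ^ 2 * σ' p) (Icc 0 p) :=
    (convex_Icc 0 p).monotoneOn_of_hasDerivAt_nonneg
      (fun x hx => ((hσ x hx.1).const_mul (2 * p)).sub ((hasDerivAt_pow 2 x).mul_const (σ' p)))
      (fun x hx => by
        rw [interior_Icc] at hx
        have := hconc.mul_le_mul_of_map_zero_nonneg h0 hx.1.le hx.2.le
        simp only [Nat.cast_ofNat, Nat.add_one_sub_one, pow_one]
        nlinarith)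
  have := hg ⟨le_rfl, hp.le⟩ ⟨hp.le, le_rfl⟩ hp.le
  simp only at this
  nlinarith

end Derivative

theorem stmt2_general (σ σ' : ℝ → ℝ)
    (hderiv : ∀ p ∈ Set.Ici (0:ℝ), HasDerivAt σ (σ' p) p)
    (hnn : ∀ p ∈ Set.Ici (0:ℝ), 0 ≤ σ p)
    (hσ0 : σ 0 = 0) (hσ'0 : σ' 0 = 0)
    (hconc : ConcaveOn ℝ (Set.Ici 0) σ') :
    ∀ p₁ ∈ Set.Ioi (0:ℝ), ∀ p₂ ∈ Set.Ioi (0:ℝ),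
      0 ≤ σ (p₁ + p₂) - σ p₁ - σ p₂ ∧
      σ (p₁ + p₂) - σ p₁ - σ p₂ ≤ 2 * (p₁ * σ p₂ + p₂ * σ p₁) / (p₁ + p₂) := by
  intro p₁ hp₁ p₂ hp₂
  have hmono := monotoneOn_deriv_of_concaveOn_of_bddBelow hderiv hconc
    ⟨0, by rintro _ ⟨x, hx, rfl⟩; exact hnn x hx⟩
  have h0 : 0 ≤ σ' 0 := hσ'0.ge
  have hsuper := add_le_add_of_monotoneOn_deriv hderiv hmono hp₁.le hp₂.le
  have hup₁ := add_le_add_mul_deriv_of_concaveOn hderiv hconc h0 hp₁.le hp₂.le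
  have hup₂ := add_le_add_mul_deriv_of_concaveOn hderiv hconc h0 hp₂.le hp₁.le
  have hp₁σ := mul_deriv_le_two_mul_of_concaveOn hderiv hconc h0 hp₁
  have hp₂σ := mul_deriv_le_two_mul_of_concaveOn hderiv hconc h0 hp₂
  rw [add_comm p₂] at hup₂
  rw [hσ0] at hsuper hup₁ hup₂ hp₁σ hp₂σ
  refine ⟨by linarith, ?_⟩
  rw [le_div_iff₀ (add_pos hp₁ hp₂)]
  linarith [mul_le_mul_of_nonneg_left hup₁ hp₁.le, mul_le_mul_of_nonneg_left hup₂ hp₂.le,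
    mul_le_mul_of_nonneg_left hp₁σ hp₂.le, mul_le_mul_of_nonneg_left hp₂σ hp₁.le]

/-- 0 ≤ σ(p₁+p₂) − σ(p₁) − σ(p₂) ≤ 2(p₁σ(p₂)+p₂σ(p₁))/(p₁+p₂). -/
theorem stmt2 (σ σ' : ℝ → ℝ)
    (hderiv : ∀ p ∈ Set.Ici (0:ℝ), HasDerivAt σ (σ' p) p)
    (hcont : ContinuousOn σ' (Set.Ici 0))
    (hnn : ∀ p ∈ Set.Ici (0:ℝ), 0 ≤ σ p)
    (hσ0 : σ 0 = 0) (hσ'0 : σ' 0 = 0)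
    (hconc : ConcaveOn ℝ (Set.Ici 0) σ') :
    ∀ p₁ ∈ Set.Ioi (0:ℝ), ∀ p₂ ∈ Set.Ioi (0:ℝ),
      0 ≤ σ (p₁ + p₂) - σ p₁ - σ p₂ ∧
      σ (p₁ + p₂) - σ p₁ - σ p₂ ≤ 2 * (p₁ * σ p₂ + p₂ * σ p₁) / (p₁ + p₂) :=
  stmt2_general σ σ' hderiv hnn hσ0 hσ'0 hconc
end
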